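/- arXiv:2503.00640 — 3 statements merged into one kernel-verified Lean document; each statement's English description precedes it below -/
import Mathlib

section
/- Concentration of the regularized degree matrix (Lemma on Λ and the error matrix E, rescaled form): There exist constants C₁ > 0 and c₁ > 0, depending only on C₀, such that: (a) for every i, 1 ≤ Λ_i ≤ C₁·β_n^{−1} (indeed Λ_i = β_n^{−1}(θ_i + τ_iθ̄ + λ_i/q²)); and (b) for all sufficiently large n, with probability at least 1 − e^{−c₁ξ}, max_{1≤i≤n} |L_i − Λ_i| ≤ C₁·ξ/(q·β_n), where L_i and Λ_i denote the i-th diagonal entries of L and Λ. -/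
open MeasureTheory Matrix Filter ProbabilityTheory

noncomputable section

/-- The parameter `ξ = (log n)^{1+a₀}`. -/
def xiPar (n : ℕ) (a₀ : ℝ) : ℝ := Real.log n ^ ((1 : ℝ) + a₀)

/-- Data of the rescaled model at dimension `n`: sample space, probability measure,
sparsity parameter `q`, regularization parameters `τ`, `λ`, noise matrix `W`,
signal matrix `H`, rank `K`, number of strong spikes `K₀`, population spiked
eigenvalues `δ` / eigenvectors `v` (1-based indexing), empirical eigenvalues
`δhat` / eigenvectors `vhat` (1-based indexing), and the QVE measures `ν`. -/
structure Mdl (n : ℕ) where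
  Ω : Type
  mΩ : MeasurableSpace Ω
  μ : @MeasureTheory.Measure Ω mΩ
  q : ℝ
  τ : Fin n → ℝ
  lam : Fin n → ℝ
  W : Ω → Matrix (Fin n) (Fin n) ℝ
  H : Matrix (Fin n) (Fin n) ℝ
  K : ℕ
  K₀ : ℕ
  δ : ℕ → ℝ
  v : ℕ → Fin n → ℝ
  δhat : Ω → ℕ → ℝ
  vhat : Ω → ℕ → Fin n → ℝ
  ν : Fin n → MeasureTheory.Measure ℝ

attribute [instance] Mdl.mΩ

namespace Mdl

variable {n : ℕ} (M : Mdl n)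

/-- entry variances `s_{ij} = E[W_{ij}²]` -/
def s (i j : Fin n) : ℝ := ∫ ω, (M.W ω i j) ^ 2 ∂M.μ

/-- `θ_i = q⁻¹ ∑_j H_{ij}` -/
def θ (i : Fin n) : ℝ := (∑ j, M.H i j) / M.q

/-- `θ̄ = n⁻¹ ∑_i θ_i` -/
def θbar : ℝ := (∑ i, M.θ i) / n

/-- `β_n = min_i (θ_i + τ_i θ̄ + λ_i/q²)` -/
def β : ℝ := ⨅ i : Fin n, (M.θ i + M.τ i * M.θbar + M.lam i / M.q ^ 2)

/-- degrees `d_i = ∑_j X̃_{ij}` -/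
def d (ω : M.Ω) (i : Fin n) : ℝ := ∑ j, (M.H i j + M.W ω i j)

/-- `d̄ = n⁻¹ ∑_j d_j` -/
def dbar (ω : M.Ω) : ℝ := (∑ j, M.d ω j) / n

/-- diagonal entries of `L = (qβ)⁻¹ diag(d_i + τ_i d̄ + λ_i/q)` -/
def Ld (ω : M.Ω) (i : Fin n) : ℝ :=
  (M.d ω i + M.τ i * M.dbar ω + M.lam i / M.q) / (M.q * M.β)

/-- diagonal entries of `Λ = E[L]` -/
def Λd (i : Fin n) : ℝ := (M.θ i + M.τ i * M.θbar + M.lam i / M.q ^ 2) / M.β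

/-- `W̄ = Λ^{-α} W Λ^{-α}` -/
def Wb (α : ℝ) (ω : M.Ω) : Matrix (Fin n) (Fin n) ℝ :=
  Matrix.diagonal (fun i => M.Λd i ^ (-α)) * M.W ω * Matrix.diagonal (fun i => M.Λd i ^ (-α))

/-- the generalized Laplacian `X = L^{-α} X̃ L^{-α}` -/
def X (α : ℝ) (ω : M.Ω) : Matrix (Fin n) (Fin n) ℝ :=
  Matrix.diagonal (fun i => M.Ld ω i ^ (-α)) * (M.H + M.W ω) *
    Matrix.diagonal (fun i => M.Ld ω i ^ (-α))

/-- `(L/Λ)^a` -/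
def LΛpow (a : ℝ) (ω : M.Ω) : Matrix (Fin n) (Fin n) ℝ :=
  Matrix.diagonal fun i => (M.Ld ω i / M.Λd i) ^ a

/-- `(L−Λ)/Λ` -/
def ELL (ω : M.Ω) : Matrix (Fin n) (Fin n) ℝ :=
  Matrix.diagonal fun i => (M.Ld ω i - M.Λd i) / M.Λd i

/-- `‖V‖_max` -/
def Vmax : ℝ := ⨆ k : {x : ℕ // x ∈ Finset.Icc 1 M.K}, ⨆ i : Fin n, |M.v (k : ℕ) i|

/-- `‖v_k‖_∞` -/
def vinf (k : ℕ) : ℝ := ⨆ i : Fin n, |M.v k i|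

/-- `ψ_n(δ_k)` -/
def ψ (a₀ : ℝ) (k : ℕ) : ℝ :=
  1 / (|M.δ k| * M.β) + xiPar n a₀ / (M.q * M.β ^ 2) + M.Vmax

/-- `𝔐 = max{1, max_i ∑_j Λ_i^{-2α} s_{ij} Λ_j^{-2α}}` -/
def frakM (α : ℝ) : ℝ :=
  max 1 (⨆ i : Fin n, M.Λd i ^ (-(2 * α)) * ∑ j, M.Λd j ^ (-(2 * α)) * M.s i j)

/-- real Stieltjes transform `M_i(x) = ∫ (t−x)⁻¹ dν_i(t)` -/
def Mre (i : Fin n) (x : ℝ) : ℝ := ∫ t, (t - x)⁻¹ ∂(M.ν i)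

/-- complex Stieltjes transform `M_i(z)` -/
def Mc (i : Fin n) (z : ℂ) : ℂ := ∫ t, ((t : ℂ) - z)⁻¹ ∂(M.ν i)

/-- `Υ(x) = diag(M_i(x))` (real argument) -/
def Υ (x : ℝ) : Matrix (Fin n) (Fin n) ℝ := Matrix.diagonal fun i => M.Mre i x

/-- `Υ(z)` (complex argument) -/
def Υc (z : ℂ) : Matrix (Fin n) (Fin n) ℂ := Matrix.diagonal fun i => M.Mc i z

/-- `Υ'(x)`, entrywise derivative -/
def Υd (x : ℝ) : Matrix (Fin n) (Fin n) ℝ := Matrix.diagonal fun i => deriv (M.Mre i) x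

/-- `V₋ₖ`: the spiked eigenvector matrix with the `k`-th column removed -/
def Vm (k : ℕ) : Matrix (Fin n) {x : ℕ // x ∈ (Finset.Icc 1 M.K).erase k} ℝ :=
  Matrix.of fun i j => M.v (j : ℕ) i

/-- `Δ₋ₖ` -/
def Dm (k : ℕ) :
    Matrix {x : ℕ // x ∈ (Finset.Icc 1 M.K).erase k}
      {x : ℕ // x ∈ (Finset.Icc 1 M.K).erase k} ℝ :=
  Matrix.diagonal fun j => M.δ (j : ℕ)

/-- `Δ₋ₖ⁻¹ + V₋ₖᵀ Υ(x) V₋ₖ` -/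
def denom (k : ℕ) (x : ℝ) :
    Matrix {x : ℕ // x ∈ (Finset.Icc 1 M.K).erase k}
      {x : ℕ // x ∈ (Finset.Icc 1 M.K).erase k} ℝ :=
  (M.Dm k)⁻¹ + (M.Vm k)ᵀ * M.Υ x * M.Vm k

/-- `Υ_k(x) = Υ(x) − Υ(x)V₋ₖ(Δ₋ₖ⁻¹+V₋ₖᵀΥ(x)V₋ₖ)⁻¹V₋ₖᵀΥ(x)` -/
def Υk (k : ℕ) (x : ℝ) : Matrix (Fin n) (Fin n) ℝ :=
  M.Υ x - M.Υ x * M.Vm k * (M.denom k x)⁻¹ * (M.Vm k)ᵀ * M.Υ x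

/-- `v_kᵀ Υ_k(x) v_k` -/
def Υkq (k : ℕ) (x : ℝ) : ℝ := M.v k ⬝ᵥ (M.Υk k x).mulVec (M.v k)

/-- the master equation
`1 + δ_k v_kᵀΥ(x)v_k − δ_k v_kᵀΥ(x)V₋ₖ(Δ₋ₖ⁻¹+V₋ₖᵀΥ(x)V₋ₖ)⁻¹V₋ₖᵀΥ(x)v_k` -/
def masterF (k : ℕ) (x : ℝ) : ℝ :=
  1 + M.δ k * (M.v k ⬝ᵥ (M.Υ x).mulVec (M.v k)) -
    M.δ k * (M.v k ⬝ᵥ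
      (M.Υ x * M.Vm k * (M.denom k x)⁻¹ * (M.Vm k)ᵀ * M.Υ x).mulVec (M.v k))

/-- `Ĩ_k` -/
def Itil (ε₀ : ℝ) (k : ℕ) : Set ℝ :=
  {x | |M.δ k| / (1 + ε₀ / 2) ≤ |x| ∧ |x| ≤ (1 + ε₀ / 2) * |M.δ k|}

/-- `‖uᵀV₋ₖ‖` -/
def uVmNorm (k : ℕ) (u : Fin n → ℝ) : ℝ :=
  Real.sqrt (∑ j : {x : ℕ // x ∈ (Finset.Icc 1 M.K).erase k}, (∑ i, u i * M.v (j : ℕ) i) ^ 2)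

/-- `v_kᵀ((L−Λ)/Λ)v_k` -/
def qf1 (k : ℕ) (ω : M.Ω) : ℝ := M.v k ⬝ᵥ (M.ELL ω).mulVec (M.v k)

/-- `v_kᵀ((L−Λ)/Λ)²v_k` -/
def qf2 (k : ℕ) (ω : M.Ω) : ℝ := M.v k ⬝ᵥ (M.ELL ω * M.ELL ω).mulVec (M.v k)

/-- `v_kᵀ((L−Λ)/Λ)W̄v_k` -/
def qf3 (α : ℝ) (k : ℕ) (ω : M.Ω) : ℝ := M.v k ⬝ᵥ (M.ELL ω * M.Wb α ω).mulVec (M.v k)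

/-- `v_kᵀW̄v_k` -/
def qfW (α : ℝ) (k : ℕ) (ω : M.Ω) : ℝ := M.v k ⬝ᵥ (M.Wb α ω).mulVec (M.v k)

/-- `v_kᵀW̄²v_k` -/
def qfW2 (α : ℝ) (k : ℕ) (ω : M.Ω) : ℝ :=
  M.v k ⬝ᵥ (M.Wb α ω * M.Wb α ω).mulVec (M.v k)

/-- `Λ_j` accessed with a (0-based) natural-number index -/
def ΛdN (j : ℕ) : ℝ := if h : j < n then M.Λd ⟨j, h⟩ else 0

/-- `L_j` accessed with a (0-based) natural-number index -/
def LdN (ω : M.Ω) (j : ℕ) : ℝ := if h : j < n then M.Ld ω ⟨j, h⟩ else 0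

/-- entry of `v_k` accessed with a (0-based) natural-number index -/
def vN (k j : ℕ) : ℝ := if h : j < n then M.v k ⟨j, h⟩ else 0

/-- entry of `v̂_k` accessed with a (0-based) natural-number index -/
def vhatN (ω : M.Ω) (k j : ℕ) : ℝ := if h : j < n then M.vhat ω k ⟨j, h⟩ else 0

/-- `s_{jl}` with first index a (0-based) natural number -/
def sN (j : ℕ) (l : Fin n) : ℝ := if h : j < n then M.s ⟨j, h⟩ l else 0

/-- the complexified matrix `W̄ − z (L/Λ)^{2α}` -/
def Amat (α : ℝ) (ω : M.Ω) (z : ℂ) : Matrix (Fin n) (Fin n) ℂ :=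
  (M.Wb α ω).map (fun x : ℝ => (x : ℂ)) - z • (M.LΛpow (2 * α) ω).map (fun x : ℝ => (x : ℂ))

/-- Basic hypotheses of the rescaled model. -/
structure HBase (M : Mdl n) (α C₀ a₀ : ℝ) : Prop where
  hn : 2 ≤ n
  prob : IsProbabilityMeasure M.μ
  hq1 : xiPar n a₀ ^ (3 : ℕ) ≤ M.q
  hq2 : M.q ≤ C₀ * Real.sqrt n
  hτ0 : ∀ i, 0 ≤ M.τ i
  hτ1 : ∀ i, M.τ i ≤ C₀
  hlam0 : ∀ i, 0 ≤ M.lam i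
  hlam1 : ∀ i, M.lam i ≤ C₀ * M.q ^ 2
  hWsym : ∀ ω, (M.W ω)ᵀ = M.W ω
  hWmeas : ∀ i j, Measurable fun ω => M.W ω i j
  hWindep : iIndepFun
    (fun (p : {p : Fin n × Fin n // p.1 ≤ p.2}) => fun ω => M.W ω p.1.1 p.1.2) M.μ
  hWint : ∀ (i j : Fin n) (p : ℕ), (p : ℝ) ≤ xiPar n a₀ →
    Integrable (fun ω => |M.W ω i j| ^ p) M.μ
  hWmean : ∀ i j, ∫ ω, M.W ω i j ∂M.μ = 0
  hWvar : ∀ i j, M.s i j ≤ C₀ / n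
  hWmom : ∀ (i j : Fin n) (p : ℕ), 3 ≤ p → (p : ℝ) ≤ xiPar n a₀ →
    ∫ ω, |M.W ω i j| ^ p ∂M.μ ≤ C₀ ^ p / (n * M.q ^ ((p : ℝ) - 2))
  hHsym : M.Hᵀ = M.H
  hHnn : ∀ i j, 0 ≤ M.H i j
  hK : 1 ≤ M.K
  hrank : M.H.rank = M.K
  hθ : ∀ i, M.θ i ≤ C₀
  hβ : 0 < M.β
  hLpos : ∀ᵐ ω ∂M.μ, ∀ i, 0 < M.Ld ω i

/-- QVE hypotheses. -/
structure HQVE (M : Mdl n) (α : ℝ) : Prop where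
  hνprob : ∀ i, IsProbabilityMeasure (M.ν i)
  hνsupp : ∀ i,
    (M.ν i) (Set.Icc (-(2 * Real.sqrt (M.frakM α))) (2 * Real.sqrt (M.frakM α)))ᶜ = 0
  hQVE : ∀ z : ℂ, 2 * Real.sqrt (M.frakM α) < ‖z‖ → ∀ i,
    (M.Mc i z)⁻¹ = -z - ((M.Λd i ^ (-(2 * α)) : ℝ) : ℂ) *
      ∑ j, ((M.Λd j ^ (-(2 * α)) : ℝ) : ℂ) * (M.s i j : ℂ) * M.Mc j z

/-- Spike hypotheses: population and empirical eigendecompositions. -/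
structure HSpike (M : Mdl n) (α : ℝ) : Prop where
  hK₀1 : 1 ≤ M.K₀
  hK₀2 : M.K₀ ≤ M.K
  hdecomp :
    Matrix.diagonal (fun i => M.Λd i ^ (-α)) * M.H * Matrix.diagonal (fun i => M.Λd i ^ (-α)) =
      ∑ k ∈ Finset.Icc 1 M.K, M.δ k • Matrix.vecMulVec (M.v k) (M.v k)
  hortho : ∀ k ∈ Finset.Icc 1 M.K, ∀ l ∈ Finset.Icc 1 M.K,
    M.v k ⬝ᵥ M.v l = if k = l then 1 else 0
  hδne : ∀ k ∈ Finset.Icc 1 M.K, M.δ k ≠ 0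
  hδmono : ∀ k ∈ Finset.Icc 1 M.K, ∀ l ∈ Finset.Icc 1 M.K, k ≤ l → |M.δ l| ≤ |M.δ k|
  hδzero : ∀ k, M.K < k → M.δ k = 0
  hδhatmeas : ∀ k, Measurable fun ω => M.δhat ω k
  hvhatmeas : ∀ k i, Measurable fun ω => M.vhat ω k i
  hhat : ∀ᵐ ω ∂M.μ,
    (∀ k ∈ Finset.Icc 1 n, (M.X α ω).mulVec (M.vhat ω k) = M.δhat ω k • M.vhat ω k) ∧
    (∀ k ∈ Finset.Icc 1 n, ∀ l ∈ Finset.Icc 1 n,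
      M.vhat ω k ⬝ᵥ M.vhat ω l = if k = l then 1 else 0) ∧
    (∀ k ∈ Finset.Icc 1 n, ∀ l ∈ Finset.Icc 1 n, k ≤ l → |M.δhat ω l| ≤ |M.δhat ω k|)

end Mdl

/-- "with high probability" for a sequence of events. -/
def WHP (Ms : (n : ℕ) → Mdl n) (E : (n : ℕ) → Set (Ms n).Ω) : Prop :=
  ∀ D : ℝ, 0 < D → ∃ N : ℕ, ∀ n, N ≤ n →
    1 - ENNReal.ofReal ((n : ℝ) ^ (-D)) ≤ (Ms n).μ (E n)

/-- The asymptotic setting: a sequence of models satisfying the model hypotheses and the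
asymptotic conditions (i)–(iv). -/
structure Asym (Ms : (n : ℕ) → Mdl n) (α C₀ a₀ ε₀ : ℝ) : Prop where
  hα : 0 < α
  hC₀ : 1 ≤ C₀
  ha₀ : 0 < a₀
  hε₀ : 0 < ε₀
  base : ∀ n, 2 ≤ n → (Ms n).HBase α C₀ a₀
  qve : ∀ n, 2 ≤ n → (Ms n).HQVE α
  spike : ∀ n, 2 ≤ n → (Ms n).HSpike α
  hq : Tendsto (fun n => (Ms n).q / Real.log n ^ (4 : ℕ)) atTop atTop
  hδK₀ : Tendsto (fun n => |(Ms n).δ (Ms n).K₀|) atTop atTop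
  hgap : ∀ n, 2 ≤ n → ∀ k ∈ Finset.Icc 1 (Ms n).K₀,
    (1 + ε₀) * |(Ms n).δ (k + 1)| < |(Ms n).δ k|
  hcond : Tendsto
    (fun n => ((Ms n).K : ℝ) * xiPar n a₀ * (Ms n).ψ a₀ (Ms n).K₀ / (Ms n).q) atTop (nhds 0)

/-- Limit locations: `t_k ∈ Ĩ_k` solves the master equation, for every `1 ≤ k ≤ K₀`. -/
def LimLoc (Ms : (n : ℕ) → Mdl n) (ε₀ : ℝ) (t : (n : ℕ) → ℕ → ℝ) : Prop :=
  ∀ n, 2 ≤ n → ∀ k ∈ Finset.Icc 1 (Ms n).K₀,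
    t n k ∈ (Ms n).Itil ε₀ k ∧ (Ms n).masterF k (t n k) = 0

/-!
Write `d_i = q θ_i + S_i` with row sums `S_i = ∑_j W_ij`. Then
`L_i - Λ_i = (S_i + τ_i S̄) / (q β)`, so (a) is arithmetic and (b) reduces to `max_i |S_i| ≲ ξ`.
Each `S_i` is a sum of `n` independent centred entries with `E|W_ij|^t ≤ C₀^t / n` for
`2 ≤ t ≤ ξ`. Expanding `(X + S)^k` binomially and inducting on the number of summands gives
`E S_i^p ≤ (2 C₀ p)^p` for even `p ≤ ξ`. Markov's inequality with `p ≈ ξ` yields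
`P(|S_i| > 2e C₀ ξ) ≤ e^(2-ξ)`, and the union bound over the `n` rows costs a factor
`n = e^(log n) ≤ e^(ξ/2 - 2)`.
-/

lemma pow_le_pow_succ_div_add_pow (m : ℕ) {a b : ℝ} (ha : 0 ≤ a) (hb : 0 < b) :
    a ^ m ≤ a ^ (m + 1) / b + b ^ m := by
  rcases le_or_gt a b with hab | hab
  · have := pow_le_pow_left₀ ha hab m
    have : 0 ≤ a ^ (m + 1) / b := by positivity
    linarith
  · have : a ^ m ≤ a ^ (m + 1) / b := by
      rw [le_div_iff₀ hb, pow_succ]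
      exact mul_le_mul_of_nonneg_left hab.le (pow_nonneg ha m)
    linarith [pow_nonneg hb.le m]

lemma sum_Ico_two_half_pow_pred_le_one (k : ℕ) :
    ∑ m ∈ Finset.Ico 2 (k + 1), (1 / 2 : ℝ) ^ (m - 1) ≤ 1 := by
  rw [Finset.sum_Ico_eq_sum_range]
  have hshift : ∀ i ∈ Finset.range (k + 1 - 2),
      (1 / 2 : ℝ) ^ (2 + i - 1) = 1 / 2 * (1 / 2) ^ i :=
    fun i _ => by rw [show 2 + i - 1 = i + 1 by omega, pow_succ, mul_comm]
  rw [Finset.sum_congr rfl hshift, ← Finset.mul_sum]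
  linarith [sum_geometric_two_le (k + 1 - 2)]

lemma exists_even_le_lt_add_two {x : ℝ} (hx : 2 ≤ x) :
    ∃ p : ℕ, Even p ∧ 2 ≤ p ∧ (p : ℝ) ≤ x ∧ x < p + 2 := by
  have hfloor : 2 ≤ ⌊x⌋₊ := Nat.le_floor (by exact_mod_cast hx)
  refine ⟨2 * (⌊x⌋₊ / 2), even_two_mul _, by omega, ?_, ?_⟩
  · calc ((2 * (⌊x⌋₊ / 2) : ℕ) : ℝ) ≤ ⌊x⌋₊ := by exact_mod_cast Nat.mul_div_le _ 2
      _ ≤ x := Nat.floor_le (by linarith)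
  · have : ⌊x⌋₊ + 1 ≤ 2 * (⌊x⌋₊ / 2) + 2 := by omega
    have : ((⌊x⌋₊ : ℕ) : ℝ) + 1 ≤ ((2 * (⌊x⌋₊ / 2) : ℕ) : ℝ) + 2 := by exact_mod_cast this
    linarith [Nat.lt_floor_add_one x]

section Moments

variable {Ω : Type*} [MeasurableSpace Ω] {μ : Measure Ω}

lemma measure_lt_abs_le_integral_pow_div [IsFiniteMeasure μ] {Y : Ω → ℝ} {p : ℕ}
    (hp : Even p) {T : ℝ} (hT : 0 < T) (hY : Integrable (fun ω => Y ω ^ p) μ) :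
    μ {ω | T < |Y ω|} ≤ ENNReal.ofReal ((∫ ω, Y ω ^ p ∂μ) / T ^ p) := by
  have hTp : 0 < T ^ p := pow_pos hT p
  have hsub : {ω | T < |Y ω|} ⊆ {ω | T ^ p ≤ Y ω ^ p} := fun ω hω => by
    show T ^ p ≤ Y ω ^ p
    rw [← hp.pow_abs (Y ω)]
    exact pow_le_pow_left₀ hT.le (le_of_lt hω) p
  have markov := mul_meas_ge_le_integral_of_nonneg
    (ae_of_all _ fun ω => hp.pow_nonneg (Y ω)) hY (T ^ p)
  refine (measure_mono hsub).trans ?_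
  rw [ENNReal.le_ofReal_iff_toReal_le (measure_ne_top _ _)
    (div_nonneg (integral_nonneg fun ω => hp.pow_nonneg _) hTp.le), le_div_iff₀ hTp,
    ← measureReal_def]
  linarith

lemma integral_abs_pow_le_two_mul_pow [IsProbabilityMeasure μ] {S : Ω → ℝ} {b : ℝ} (hb : 0 < b)
    {K : ℕ} (hS : ∀ m ≤ K, Integrable (fun ω => S ω ^ m) μ)
    (hSeven : ∀ m, Even m → 2 ≤ m → m ≤ K → ∫ ω, S ω ^ m ∂μ ≤ b ^ m)
    {m : ℕ} (hm : m < K) : ∫ ω, |S ω| ^ m ∂μ ≤ 2 * b ^ m := by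
  rcases Nat.even_or_odd m with hme | hmo
  · rcases Nat.eq_zero_or_pos m with rfl | hm0
    · simp
    · simp_rw [hme.pow_abs]
      have := hSeven m hme (by rcases hme with ⟨r, hr⟩; omega) hm.le
      linarith [pow_pos hb m]
  · have habs : ∀ t ≤ K, Integrable (fun ω => |S ω| ^ t) μ := fun t ht => by
      simpa only [abs_pow] using (hS t ht).abs
    have hsucc : ∫ ω, |S ω| ^ (m + 1) ∂μ ≤ b ^ (m + 1) := by
      simp_rw [(Odd.add_one hmo).pow_abs]
      exact hSeven (m + 1) (Odd.add_one hmo) (by have := hmo.pos; omega) hm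
    calc ∫ ω, |S ω| ^ m ∂μ ≤ ∫ ω, (|S ω| ^ (m + 1) / b + b ^ m) ∂μ :=
          integral_mono (habs m hm.le)
            (((habs (m + 1) hm).div_const b).add (integrable_const _))
            fun ω => pow_le_pow_succ_div_add_pow m (abs_nonneg _) hb
      _ = (∫ ω, |S ω| ^ (m + 1) ∂μ) / b + b ^ m := by
          rw [integral_add ((habs (m + 1) hm).div_const b) (integrable_const _), integral_div,
            integral_const, probReal_univ, one_smul]
      _ ≤ b ^ (m + 1) / b + b ^ m := by gcongr
      _ = 2 * b ^ m := by rw [pow_succ, mul_div_cancel_right₀ _ hb.ne']; ring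

end Moments

namespace ProbabilityTheory

variable {Ω : Type*} [MeasurableSpace Ω] {μ : Measure Ω} {X S : Ω → ℝ}
  {ι : Type*} {f : ι → Ω → ℝ}

lemma IndepFun.integrable_pow_mul_pow (hXS : IndepFun X S μ) {m t : ℕ}
    (hX : Integrable (fun ω => X ω ^ m) μ) (hS : Integrable (fun ω => S ω ^ t) μ) :
    Integrable (fun ω => X ω ^ m * S ω ^ t) μ :=
  (hXS.comp (measurable_id.pow_const m) (measurable_id.pow_const t)).integrable_mul hX hS

lemma IndepFun.integrable_add_pow (hXS : IndepFun X S μ) {k : ℕ}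
    (hX : ∀ m ≤ k, Integrable (fun ω => X ω ^ m) μ)
    (hS : ∀ m ≤ k, Integrable (fun ω => S ω ^ m) μ) :
    Integrable (fun ω => (X ω + S ω) ^ k) μ := by
  simp_rw [add_pow]
  refine integrable_finsetSum _ fun m hm => ?_
  have hmk : m ≤ k := Finset.mem_range_succ_iff.mp hm
  exact (hXS.integrable_pow_mul_pow (hX m hmk) (hS (k - m) (Nat.sub_le k m))).mul_const _

lemma IndepFun.integral_add_pow (hXS : IndepFun X S μ) {k : ℕ}
    (hX : ∀ m ≤ k, Integrable (fun ω => X ω ^ m) μ)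
    (hS : ∀ m ≤ k, Integrable (fun ω => S ω ^ m) μ) :
    ∫ ω, (X ω + S ω) ^ k ∂μ = ∑ m ∈ Finset.range (k + 1),
      (∫ ω, X ω ^ m ∂μ) * (∫ ω, S ω ^ (k - m) ∂μ) * (k.choose m : ℝ) := by
  simp_rw [add_pow]
  rw [integral_finsetSum]
  · refine Finset.sum_congr rfl fun m hm => ?_
    have hmk : m ≤ k := Finset.mem_range_succ_iff.mp hm
    rw [integral_mul_const]
    congr 1
    exact (hXS.comp (measurable_id.pow_const m)
      (measurable_id.pow_const (k - m))).integral_fun_mul_eq_mul_integral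
        (hX m hmk).aestronglyMeasurable (hS (k - m) (Nat.sub_le k m)).aestronglyMeasurable
  · intro m hm
    have hmk : m ≤ k := Finset.mem_range_succ_iff.mp hm
    exact (hXS.integrable_pow_mul_pow (hX m hmk) (hS (k - m) (Nat.sub_le k m))).mul_const _

lemma iIndepFun.indepFun_sum_of_notMem (hindep : iIndepFun f μ) (hmeas : ∀ i, Measurable (f i))
    {s : Finset ι} {a : ι} (ha : a ∉ s) : IndepFun (f a) (fun ω => ∑ i ∈ s, f i ω) μ := by
  have h := (hindep.indepFun_finsetSum_of_notMem hmeas ha).symm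
  rwa [Finset.sum_fn] at h

variable [IsProbabilityMeasure μ]

lemma IndepFun.integral_add_pow_le (hXS : IndepFun X S μ) {A N : ℝ} (hA : 0 ≤ A) (hN : 0 < N)
    {k : ℕ} (hk : 1 ≤ k)
    (hX : ∀ m ≤ k, Integrable (fun ω => X ω ^ m) μ)
    (hS : ∀ m ≤ k, Integrable (fun ω => S ω ^ m) μ)
    (hXmean : ∫ ω, X ω ∂μ = 0)
    (hXmom : ∀ m, 2 ≤ m → m ≤ k → ∫ ω, |X ω| ^ m ∂μ ≤ A ^ m / N)
    (hSmom : ∀ m, m + 2 ≤ k → ∫ ω, |S ω| ^ m ∂μ ≤ 2 * (2 * A * k) ^ m) :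
    ∫ ω, (X ω + S ω) ^ k ∂μ ≤ ∫ ω, S ω ^ k ∂μ + (2 * A * k) ^ k / N := by
  -- In the binomial expansion the `m = 1` term vanishes since `X` is centred, and the
  -- `m`-th term for `m ≥ 2` is at most `(2Ak)^k / N · 2^(1-m)`.
  have hterm : ∀ m ∈ Finset.Ico 2 (k + 1),
      (∫ ω, X ω ^ m ∂μ) * (∫ ω, S ω ^ (k - m) ∂μ) * (k.choose m : ℝ)
        ≤ (2 * A * k) ^ k / N * (1 / 2) ^ (m - 1) := by
    intro m hm
    obtain ⟨hm2, hmk⟩ : 2 ≤ m ∧ m ≤ k := by rw [Finset.mem_Ico] at hm; omega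
    have hXm : |∫ ω, X ω ^ m ∂μ| ≤ A ^ m / N :=
      abs_integral_le_integral_abs.trans_eq (by simp_rw [abs_pow]) |>.trans (hXmom m hm2 hmk)
    have hSm : |∫ ω, S ω ^ (k - m) ∂μ| ≤ 2 * (2 * A * k) ^ (k - m) :=
      abs_integral_le_integral_abs.trans_eq (by simp_rw [abs_pow]) |>.trans
        (hSmom (k - m) (by omega))
    have hchoose : (k.choose m : ℝ) ≤ (k : ℝ) ^ m := by exact_mod_cast Nat.choose_le_pow k m
    calc (∫ ω, X ω ^ m ∂μ) * (∫ ω, S ω ^ (k - m) ∂μ) * (k.choose m : ℝ)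
        ≤ |∫ ω, X ω ^ m ∂μ| * |∫ ω, S ω ^ (k - m) ∂μ| * (k.choose m : ℝ) := by
          rw [← abs_mul]; exact mul_le_mul_of_nonneg_right (le_abs_self _) (Nat.cast_nonneg _)
      _ ≤ A ^ m / N * (2 * (2 * A * k) ^ (k - m)) * (k : ℝ) ^ m := by gcongr
      _ = (2 * A * k) ^ k / N * (1 / 2) ^ (m - 1) := by
          obtain ⟨t, rfl⟩ : ∃ t, k = m + t := ⟨k - m, by omega⟩
          obtain ⟨u, rfl⟩ : ∃ u, m = u + 1 := ⟨m - 1, by omega⟩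
          rw [show u + 1 + t - (u + 1) = t by omega, Nat.add_sub_cancel, _root_.one_div_pow]
          field_simp
          ring
  rw [hXS.integral_add_pow hX hS, Finset.range_eq_Ico,
    Finset.sum_eq_sum_Ico_succ_bot (by omega : 0 < k + 1),
    Finset.sum_eq_sum_Ico_succ_bot (by omega : 1 < k + 1)]
  have htail := (Finset.sum_le_sum hterm).trans_eq (Finset.mul_sum ..).symm
  have hgeom := mul_le_mul_of_nonneg_left (sum_Ico_two_half_pow_pred_le_one k)
    (by positivity : 0 ≤ (2 * A * k) ^ k / N)
  simp only [pow_zero, integral_const, probReal_univ, one_smul, Nat.sub_zero,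
    Nat.choose_zero_right, Nat.cast_one, mul_one, one_mul, pow_one, hXmean, zero_mul]
  linarith

variable [DecidableEq ι]

lemma iIndepFun.integrable_sum_pow (hindep : iIndepFun f μ) (hmeas : ∀ i, Measurable (f i))
    {P : ℕ} (hint : ∀ i, ∀ t ≤ P, Integrable (fun ω => f i ω ^ t) μ) (s : Finset ι) :
    ∀ j ≤ P, Integrable (fun ω => (∑ i ∈ s, f i ω) ^ j) μ := by
  induction s using Finset.induction_on with
  | empty => intro j _; simp only [Finset.sum_empty]; exact (integrable_const (0 ^ j : ℝ))
  | insert a s ha ih =>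
    intro j hj
    simp_rw [Finset.sum_insert ha]
    exact (hindep.indepFun_sum_of_notMem hmeas ha).integrable_add_pow
      (fun m hm => hint a m (hm.trans hj))
      (fun m hm => ih m (hm.trans hj))

lemma iIndepFun.integral_sum_pow_le (hindep : iIndepFun f μ) (hmeas : ∀ i, Measurable (f i))
    {A N : ℝ} (hA : 0 < A) (hN : 0 < N) {P : ℕ}
    (hint : ∀ i, ∀ t ≤ P, Integrable (fun ω => f i ω ^ t) μ)
    (hmean : ∀ i, ∫ ω, f i ω ∂μ = 0)
    (hmom : ∀ i t, 2 ≤ t → t ≤ P → ∫ ω, |f i ω| ^ t ∂μ ≤ A ^ t / N) (s : Finset ι)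
    (hs : (s.card : ℝ) ≤ N) {k : ℕ} (hk : Even k) (hk2 : 2 ≤ k) (hkP : k ≤ P) :
    ∫ ω, (∑ i ∈ s, f i ω) ^ k ∂μ ≤ (s.card / N) * (2 * A * k) ^ k := by
  induction s using Finset.induction_on generalizing k with
  | empty => simp [zero_pow (by omega : k ≠ 0)]
  | insert a s ha ih =>
    rw [Finset.card_insert_of_notMem ha, Nat.cast_succ] at hs ⊢
    set S : Ω → ℝ := fun ω => ∑ i ∈ s, f i ω
    have hSint := hindep.integrable_sum_pow hmeas hint s
    have hSeven : ∀ m, Even m → 2 ≤ m → m ≤ k → ∫ ω, S ω ^ m ∂μ ≤ (2 * A * k) ^ m := by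
      intro m hme hm2 hmk
      refine (ih (by linarith) hme hm2 (hmk.trans hkP)).trans ?_
      have hmk' : (m : ℝ) ≤ k := by exact_mod_cast hmk
      calc (s.card : ℝ) / N * (2 * A * m) ^ m ≤ 1 * (2 * A * k) ^ m := by
            gcongr
            exact (div_le_one hN).mpr (by linarith)
        _ = (2 * A * k) ^ m := one_mul _
    have hstep := (hindep.indepFun_sum_of_notMem hmeas ha).integral_add_pow_le hA.le hN
      (by omega) (fun m hm => hint a m (hm.trans hkP)) (fun m hm => hSint m (hm.trans hkP))
      (hmean a)
      (fun m hm2 hmk => hmom a m hm2 (hmk.trans hkP))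
      (fun m hm => integral_abs_pow_le_two_mul_pow (by positivity)
        (fun m hm => hSint m (hm.trans hkP)) hSeven (by omega))
    have hS := ih (by linarith) hk hk2 hkP
    simp_rw [Finset.sum_insert ha]
    calc ∫ ω, (f a ω + S ω) ^ k ∂μ ≤ ∫ ω, S ω ^ k ∂μ + (2 * A * k) ^ k / N := hstep
      _ ≤ s.card / N * (2 * A * k) ^ k + (2 * A * k) ^ k / N := by gcongr
      _ = (s.card + 1) / N * (2 * A * k) ^ k := by ring

end ProbabilityTheory

lemma xiPar_pos {n : ℕ} (hn : 2 ≤ n) (a₀ : ℝ) : 0 < xiPar n a₀ :=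
  Real.rpow_pos_of_pos (Real.log_pos (by exact_mod_cast hn)) _

lemma eventually_xiPar_ge {a₀ : ℝ} (ha₀ : 0 < a₀) :
    ∀ᶠ n : ℕ in atTop, 4 ≤ xiPar n a₀ ∧ Real.log n + 2 ≤ xiPar n a₀ / 2 := by
  have hlog : Tendsto (fun n : ℕ => Real.log n) atTop atTop :=
    Real.tendsto_log_atTop.comp tendsto_natCast_atTop_atTop
  filter_upwards [hlog.eventually ((eventually_ge_atTop 1).and
    ((tendsto_rpow_atTop ha₀).eventually_ge_atTop 6))] with n ⟨h1, h6⟩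
  have hxi : xiPar n a₀ = Real.log n * Real.log n ^ a₀ := by
    rw [xiPar, Real.rpow_add (by linarith), Real.rpow_one]
  rw [hxi]
  constructor <;> nlinarith

section UpperPair

variable {ι : Type*} [LinearOrder ι]

-- The independent entries of a symmetric matrix are indexed by pairs `p.1 ≤ p.2`;
-- `upperPair i j` is the one carrying the entry `(i, j)`.
def upperPair (i j : ι) : {p : ι × ι // p.1 ≤ p.2} :=
  if h : i ≤ j then ⟨(i, j), h⟩ else ⟨(j, i), le_of_not_ge h⟩

lemma upperPair_injective (i : ι) : Function.Injective (upperPair i) := by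
  intro j k hjk
  unfold upperPair at hjk
  split_ifs at hjk with hj hk hk <;> simp only [Subtype.mk.injEq, Prod.mk.injEq] at hjk <;>
    grind

lemma Matrix.apply_upperPair {R : Type*} {A : Matrix ι ι R} (hA : Aᵀ = A) (i j : ι) :
    A (upperPair i j).1.1 (upperPair i j).1.2 = A i j := by
  unfold upperPair
  split_ifs
  · rfl
  · exact congrFun (congrFun hA i) j

end UpperPair

namespace Mdl

variable {n : ℕ} {M : Mdl n} {α C₀ a₀ : ℝ}

lemma β_le (M : Mdl n) (i : Fin n) : M.β ≤ M.θ i + M.τ i * M.θbar + M.lam i / M.q ^ 2 :=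
  ciInf_le (Set.finite_range _).bddBelow i

lemma Ld_sub_Λd (hq : M.q ≠ 0) (ω : M.Ω) (i : Fin n) :
    M.Ld ω i - M.Λd i =
      (∑ j, M.W ω i j + M.τ i * ((∑ j, ∑ l, M.W ω j l) / n)) / (M.q * M.β) := by
  have hd : ∀ j, M.d ω j = M.q * M.θ j + ∑ l, M.W ω j l := fun j => by
    rw [d, θ, Finset.sum_add_distrib, mul_div_cancel₀ _ hq]
  have hdbar : M.dbar ω = M.q * M.θbar + (∑ j, ∑ l, M.W ω j l) / n := by
    simp only [dbar, θbar, hd, Finset.sum_add_distrib, ← Finset.mul_sum]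
    ring
  rw [Ld, Λd, hd, hdbar]
  field_simp
  ring

namespace HBase

variable (hB : M.HBase α C₀ a₀)
include hB

lemma q_pos : 0 < M.q :=
  (pow_pos (xiPar_pos hB.hn a₀) 3).trans_le hB.hq1

lemma one_le_q (hξ : 1 ≤ xiPar n a₀) : 1 ≤ M.q :=
  (one_le_pow₀ hξ).trans hB.hq1

lemma θbar_le : M.θbar ≤ C₀ := by
  have hn : (0 : ℝ) < n := by have := hB.hn; positivity
  rw [θbar, div_le_iff₀ hn]
  calc ∑ i, M.θ i ≤ ∑ _i : Fin n, C₀ := Finset.sum_le_sum fun i _ => hB.hθ i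
    _ = C₀ * n := by simp [mul_comm]

lemma θbar_nonneg : 0 ≤ M.θbar :=
  div_nonneg (Finset.sum_nonneg fun _ _ =>
    div_nonneg (Finset.sum_nonneg fun j _ => hB.hHnn _ j) hB.q_pos.le) (Nat.cast_nonneg n)

lemma one_le_Λd (i : Fin n) : 1 ≤ M.Λd i := by
  rw [Λd, le_div_iff₀ hB.hβ, one_mul]
  exact M.β_le i

lemma Λd_le (hC₀ : 1 ≤ C₀) (i : Fin n) : M.Λd i ≤ 3 * C₀ ^ 2 / M.β := by
  rw [Λd, div_le_div_iff_of_pos_right hB.hβ]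
  have hτθ : M.τ i * M.θbar ≤ C₀ * C₀ :=
    mul_le_mul (hB.hτ1 i) hB.θbar_le hB.θbar_nonneg (by linarith)
  have hlam : M.lam i / M.q ^ 2 ≤ C₀ := by
    rw [div_le_iff₀ (pow_pos hB.q_pos 2)]
    exact hB.hlam1 i
  nlinarith [hB.hθ i]

lemma integrable_entry_pow (i j : Fin n) {t : ℕ} (ht : (t : ℝ) ≤ xiPar n a₀) :
    Integrable (fun ω => M.W ω i j ^ t) M.μ :=
  (hB.hWint i j t ht).mono' ((hB.hWmeas i j).pow_const t).aestronglyMeasurable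
    (ae_of_all _ fun ω => by rw [Real.norm_eq_abs, abs_pow])

lemma integral_abs_entry_pow_le (hC₀ : 1 ≤ C₀) (hq : 1 ≤ M.q) (i j : Fin n) {t : ℕ}
    (ht2 : 2 ≤ t) (htξ : (t : ℝ) ≤ xiPar n a₀) :
    ∫ ω, |M.W ω i j| ^ t ∂M.μ ≤ C₀ ^ t / n := by
  rcases ht2.eq_or_lt with rfl | ht3
  · calc ∫ ω, |M.W ω i j| ^ 2 ∂M.μ = M.s i j := by simp only [s, sq_abs]
      _ ≤ C₀ / n := hB.hWvar i j
      _ ≤ C₀ ^ 2 / n := by gcongr; nlinarith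
  · refine (hB.hWmom i j t ht3 htξ).trans ?_
    have hqt : 1 ≤ M.q ^ ((t : ℝ) - 2) :=
      Real.one_le_rpow hq (sub_nonneg.2 (by exact_mod_cast ht3.le))
    have hn : (0 : ℝ) < n := by have := hB.hn; positivity
    gcongr
    exact le_mul_of_one_le_right hn.le hqt

lemma iIndepFun_row (i : Fin n) : iIndepFun (fun j ω => M.W ω i j) M.μ := by
  convert hB.hWindep.precomp (upperPair_injective i) using 2 with j
  funext ω
  exact (Matrix.apply_upperPair (hB.hWsym ω) i j).symm

lemma integral_rowSum_pow_le (hC₀ : 1 ≤ C₀) (hq : 1 ≤ M.q) (i : Fin n) {p : ℕ} (hp : Even p)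
    (hp2 : 2 ≤ p) (hpξ : (p : ℝ) ≤ xiPar n a₀) :
    ∫ ω, (∑ j, M.W ω i j) ^ p ∂M.μ ≤ (2 * C₀ * p) ^ p := by
  have := hB.prob
  have hn : (0 : ℝ) < n := by have := hB.hn; positivity
  have hle : ∀ t ≤ p, (t : ℝ) ≤ xiPar n a₀ := fun t ht => le_trans (by exact_mod_cast ht) hpξ
  have hmom := (hB.iIndepFun_row i).integral_sum_pow_le (hB.hWmeas i) (by positivity) hn
    (fun j t ht => hB.integrable_entry_pow i j (hle t ht)) (hB.hWmean i)
    (fun j t ht2 htp => hB.integral_abs_entry_pow_le hC₀ hq i j ht2 (hle t htp)) Finset.univ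
    (by simp) hp hp2 le_rfl
  simpa [div_self hn.ne'] using hmom

lemma measure_rowSum_gt_le (hC₀ : 1 ≤ C₀) (hξ : 4 ≤ xiPar n a₀) (i : Fin n) :
    M.μ {ω | 2 * Real.exp 1 * C₀ * xiPar n a₀ < |∑ j, M.W ω i j|} ≤
      ENNReal.ofReal (Real.exp (2 - xiPar n a₀)) := by
  have := hB.prob
  obtain ⟨p, hp, hp2, hpξ, hξp⟩ := exists_even_le_lt_add_two (show (2 : ℝ) ≤ xiPar n a₀ by linarith)
  have hq := hB.one_le_q (by linarith)
  have hT : 0 < 2 * Real.exp 1 * C₀ * xiPar n a₀ := by positivity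
  have hint := (hB.iIndepFun_row i).integrable_sum_pow (hB.hWmeas i)
    (fun j t ht => hB.integrable_entry_pow i j (le_trans (by exact_mod_cast ht) hpξ))
    Finset.univ p le_rfl
  refine (measure_lt_abs_le_integral_pow_div hp hT hint).trans (ENNReal.ofReal_le_ofReal ?_)
  calc (∫ ω, (∑ j, M.W ω i j) ^ p ∂M.μ) / (2 * Real.exp 1 * C₀ * xiPar n a₀) ^ p
      ≤ (2 * C₀ * p) ^ p / (2 * Real.exp 1 * C₀ * xiPar n a₀) ^ p := by
        gcongr
        exact hB.integral_rowSum_pow_le hC₀ hq i hp hp2 hpξ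
    _ = (p / (Real.exp 1 * xiPar n a₀)) ^ p := by
        rw [← div_pow]
        congr 1
        field_simp
    _ ≤ Real.exp (-1) ^ p := by
        gcongr
        rw [Real.exp_neg, div_le_iff₀ (by positivity)]
        field_simp
        exact hpξ
    _ = Real.exp (-p) := by rw [← Real.exp_nat_mul]; ring_nf
    _ ≤ Real.exp (2 - xiPar n a₀) := Real.exp_le_exp.2 (by linarith)

lemma abs_Ld_sub_Λd_le {ω : M.Ω} {T : ℝ} (hrow : ∀ j, |∑ l, M.W ω j l| ≤ T) (i : Fin n) :
    |M.Ld ω i - M.Λd i| ≤ (1 + C₀) * T / (M.q * M.β) := by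
  have hn : (0 : ℝ) < n := by have := hB.hn; positivity
  have hmean : |(∑ j, ∑ l, M.W ω j l) / n| ≤ T := by
    rw [abs_div, Nat.abs_cast, div_le_iff₀ hn]
    calc |∑ j, ∑ l, M.W ω j l| ≤ ∑ j, |∑ l, M.W ω j l| := Finset.abs_sum_le_sum_abs _ _
      _ ≤ ∑ _j : Fin n, T := Finset.sum_le_sum fun j _ => hrow j
      _ = T * n := by simp [mul_comm]
  rw [M.Ld_sub_Λd hB.q_pos.ne', abs_div, abs_of_pos (mul_pos hB.q_pos hB.hβ)]
  refine div_le_div_of_nonneg_right ?_ (mul_pos hB.q_pos hB.hβ).le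
  calc |∑ l, M.W ω i l + M.τ i * ((∑ j, ∑ l, M.W ω j l) / n)|
      ≤ |∑ l, M.W ω i l| + M.τ i * |(∑ j, ∑ l, M.W ω j l) / n| :=
        (abs_add_le _ _).trans_eq (by rw [abs_mul, abs_of_nonneg (hB.hτ0 i)])
    _ ≤ T + C₀ * T :=
        add_le_add (hrow i) (mul_le_mul (hB.hτ1 i) hmean (abs_nonneg _)
          ((hB.hτ0 i).trans (hB.hτ1 i)))
    _ = (1 + C₀) * T := by ring

lemma one_sub_exp_le_measure_abs_Ld_sub_Λd_le (hC₀ : 1 ≤ C₀) (hξ : 4 ≤ xiPar n a₀)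
    (hlog : Real.log n + 2 ≤ xiPar n a₀ / 2) :
    1 - ENNReal.ofReal (Real.exp (-(1 / 2 * xiPar n a₀))) ≤
      M.μ {ω | ∀ i, |M.Ld ω i - M.Λd i| ≤
        4 * Real.exp 1 * C₀ ^ 2 * xiPar n a₀ / (M.q * M.β)} := by
  have := hB.prob
  set T := 2 * Real.exp 1 * C₀ * xiPar n a₀
  have hn : (0 : ℝ) < n := by have := hB.hn; positivity
  set B := ⋃ i : Fin n, {ω | T < |∑ j, M.W ω i j|}
  have hB_le : M.μ B ≤ ENNReal.ofReal (Real.exp (-(1 / 2 * xiPar n a₀))) := calc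
    M.μ B ≤ ∑ i : Fin n, M.μ {ω | T < |∑ j, M.W ω i j|} := measure_iUnion_fintype_le _ _
    _ ≤ ∑ _i : Fin n, ENNReal.ofReal (Real.exp (2 - xiPar n a₀)) :=
        Finset.sum_le_sum fun i _ => hB.measure_rowSum_gt_le hC₀ hξ i
    _ = ENNReal.ofReal (n * Real.exp (2 - xiPar n a₀)) := by
        rw [Finset.sum_const, Finset.card_univ, Fintype.card_fin, nsmul_eq_mul,
          ENNReal.ofReal_mul hn.le, ENNReal.ofReal_natCast]
    _ ≤ ENNReal.ofReal (Real.exp (-(1 / 2 * xiPar n a₀))) := by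
        gcongr
        rw [← Real.exp_log hn, ← Real.exp_add]
        exact Real.exp_le_exp.2 (by linarith)
  have hgood : Bᶜ ⊆ {ω | ∀ i, |M.Ld ω i - M.Λd i| ≤
      4 * Real.exp 1 * C₀ ^ 2 * xiPar n a₀ / (M.q * M.β)} := fun ω hω i => by
    have hrow : ∀ j, |∑ l, M.W ω j l| ≤ T := fun j => not_lt.1 fun h =>
      hω (Set.mem_iUnion.2 ⟨j, h⟩)
    refine (hB.abs_Ld_sub_Λd_le hrow i).trans (div_le_div_of_nonneg_right ?_
      (mul_pos hB.q_pos hB.hβ).le)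
    calc (1 + C₀) * T ≤ 2 * C₀ * T := by gcongr; linarith
      _ = 4 * Real.exp 1 * C₀ ^ 2 * xiPar n a₀ := by ring
  rw [tsub_le_iff_right]
  calc 1 = M.μ (Bᶜ ∪ B) := by rw [Set.compl_union_self, measure_univ]
    _ ≤ M.μ Bᶜ + M.μ B := measure_union_le _ _
    _ ≤ _ := add_le_add (measure_mono hgood) hB_le

end HBase

end Mdl

/-- concentration of the regularized degree matrix. -/
theorem stmt_10 (C₀ : ℝ) (hC₀ : 1 ≤ C₀) :
    ∃ C₁ c₁ : ℝ, 0 < C₁ ∧ 0 < c₁ ∧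
      ∀ α a₀ : ℝ, 0 < α → 0 < a₀ → ∃ N : ℕ,
        ∀ n : ℕ, 2 ≤ n → ∀ M : Mdl n, M.HBase α C₀ a₀ →
          ((∀ i, M.Λd i = (M.θ i + M.τ i * M.θbar + M.lam i / M.q ^ 2) / M.β ∧
              1 ≤ M.Λd i ∧ M.Λd i ≤ C₁ / M.β) ∧
            (N ≤ n →
              1 - ENNReal.ofReal (Real.exp (-(c₁ * xiPar n a₀))) ≤
                M.μ {ω | ∀ i, |M.Ld ω i - M.Λd i| ≤ C₁ * xiPar n a₀ / (M.q * M.β)})) := by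
  refine ⟨4 * Real.exp 1 * C₀ ^ 2, 1 / 2, by positivity, by norm_num, fun α a₀ _ ha₀ => ?_⟩
  obtain ⟨N, hN⟩ := eventually_atTop.1 (eventually_xiPar_ge ha₀)
  refine ⟨N, fun n _ M hB => ⟨fun i => ⟨rfl, hB.one_le_Λd i, ?_⟩, fun hNn => ?_⟩⟩
  · refine (hB.Λd_le hC₀ i).trans ?_
    gcongr
    · exact hB.hβ.le
    nlinarith [Real.add_one_le_exp 1]
  · obtain ⟨hξ, hlog⟩ := hN n hNn
    exact hB.one_sub_exp_le_measure_abs_Ld_sub_Λd_le hC₀ hξ hlog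
end
end

section
/- Master determinant equation for the spiked eigenvalues: For any z ∈ ℂ such that W̄ − z·(L/Λ)^{2α} is invertible, writing G(z) := (W̄ − z·(L/Λ)^{2α})^{−1}, one has det(X − z·I_n) = 0 if and only if det(Δ^{−1} + Vᵀ·G(z)·V) = 0. -/
/-!
Since `Λ^{-α} H Λ^{-α} = V Δ Vᵀ`, one has `W̄ + V Δ Vᵀ = Λ^{-α} X̃ Λ^{-α}`, and with the
diagonal scaling `E = (L/Λ)^{-α}` (so that `E Λ^{-α} = L^{-α}` and `E (L/Λ)^{2α} E = 1`)
`X − z = E (W̄ − z (L/Λ)^{2α} + V Δ Vᵀ) E`. As `E` is invertible, the claim is the matrix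
determinant lemma `det (A + V Δ Vᵀ) = det A · det (Δ⁻¹ + Vᵀ A⁻¹ V) · det Δ` for
`A = G(z)⁻¹`.
-/

open Matrix

namespace Matrix

variable {m n R : Type*} [Fintype m] [DecidableEq m] [Fintype n] [DecidableEq n]

theorem map_nonsing_inv [CommRing R] {S : Type*} [CommRing S] (f : R →+* S)
    {A : Matrix n n R} (hA : IsUnit A.det) : A⁻¹.map f = (A.map f)⁻¹ :=
  (inv_eq_left_inv <| by
    rw [← Matrix.map_mul, nonsing_inv_mul _ hA, Matrix.map_one _ f.map_zero f.map_one]).symm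

theorem det_add_mul_mul [CommRing R] {A : Matrix m m R} (U : Matrix m n R) {C : Matrix n n R}
    (V : Matrix n m R) (hA : IsUnit A.det) (hC : IsUnit C.det) :
    (A + U * C * V).det = A.det * (C⁻¹ + V * A⁻¹ * U).det * C.det := by
  rw [det_add_mul (U * C) V hA, mul_assoc, ← det_mul, Matrix.add_mul, nonsing_inv_mul _ hC,
    ← Matrix.mul_assoc]

theorem det_add_mul_mul_eq_zero_iff [CommRing R] [IsDomain R] {A : Matrix m m R}
    (U : Matrix m n R) {C : Matrix n n R} (V : Matrix n m R) (hA : IsUnit A.det)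
    (hC : IsUnit C.det) : (A + U * C * V).det = 0 ↔ (C⁻¹ + V * A⁻¹ * U).det = 0 := by
  simp [det_add_mul_mul U V hA hC, hA.ne_zero, hC.ne_zero]

theorem det_diagonal_mul_mul_diagonal_eq_zero_iff [CommRing R] [IsDomain R] {d : n → R}
    (hd : ∀ i, d i ≠ 0) (A : Matrix n n R) :
    (diagonal d * A * diagonal d).det = 0 ↔ A.det = 0 := by
  simp [det_mul, det_diagonal, Finset.prod_ne_zero_iff.mpr fun i _ => hd i]

theorem det_sub_smul_one_eq_zero_iff_of_congr [CommRing R] [IsDomain R] {d : n → R}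
    (hd : ∀ i, d i ≠ 0) {X W D P : Matrix n n R} (hX : X = diagonal d * (W + P) * diagonal d)
    (hD : diagonal d * D * diagonal d = 1) (z : R) :
    (X - z • 1).det = 0 ↔ (W - z • D + P).det = 0 := by
  rw [← det_diagonal_mul_mul_diagonal_eq_zero_iff hd (W - z • D + P), hX, ← hD]
  simp only [Matrix.mul_add, Matrix.add_mul, Matrix.mul_sub, Matrix.sub_mul, Matrix.mul_smul,
    Matrix.smul_mul]
  rw [add_sub_right_comm]

end Matrix

theorem mul_sub_mul_mul_add_of_mul_eq_one {R : Type*} [Ring R] {a b : R} (hab : a * b = 1)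
    (hba : b * a = 1) (x p : R) : a * (x - b * p * b) * a + p = a * x * a := by
  have : a * (b * p * b) * a = p := by
    rw [← mul_assoc, ← mul_assoc, hab, one_mul, mul_assoc, hba, mul_one]
  rw [mul_sub, sub_mul, this, sub_add_cancel]

section Scaling

variable {n k : Type*} [Fintype n] [DecidableEq n] [Fintype k] {α : ℝ} {Ld Λd : n → ℝ}

theorem diagonal_rpow_neg_mul_diagonal_rpow (hΛ : ∀ i, 0 < Λd i) :
    diagonal (fun i => Λd i ^ (-α)) * diagonal (fun i => Λd i ^ α) = 1 := by
  rw [diagonal_mul_diagonal, ← diagonal_one]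
  refine congrArg diagonal (funext fun i => ?_)
  rw [Real.rpow_neg (hΛ i).le, inv_mul_cancel₀ (Real.rpow_pos_of_pos (hΛ i) α).ne']

theorem diagonal_rpow_neg_conj_sub_spike_add_spike (hΛ : ∀ i, 0 < Λd i) (Y : Matrix n n ℝ)
    (V : Matrix n k ℝ) (Δ : Matrix k k ℝ) :
    diagonal (fun i => Λd i ^ (-α)) *
        (Y - diagonal (fun i => Λd i ^ α) * V * Δ * Vᵀ * diagonal fun i => Λd i ^ α) *
        diagonal (fun i => Λd i ^ (-α)) + V * Δ * Vᵀ =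
      diagonal (fun i => Λd i ^ (-α)) * Y * diagonal fun i => Λd i ^ (-α) := by
  have hab := diagonal_rpow_neg_mul_diagonal_rpow (α := α) hΛ
  simpa only [Matrix.mul_assoc] using
    mul_sub_mul_mul_add_of_mul_eq_one hab (mul_eq_one_comm.mp hab) Y (V * Δ * Vᵀ)

theorem diagonal_rpow_neg_conj_eq (hL : ∀ i, 0 < Ld i) (hΛ : ∀ i, 0 < Λd i) (Y : Matrix n n ℝ) :
    diagonal (fun i => Ld i ^ (-α)) * Y * diagonal (fun i => Ld i ^ (-α)) =
      diagonal (fun i => (Ld i / Λd i) ^ (-α)) *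
        (diagonal (fun i => Λd i ^ (-α)) * Y * diagonal fun i => Λd i ^ (-α)) *
        diagonal fun i => (Ld i / Λd i) ^ (-α) := by
  have h : ∀ i, Ld i ^ (-α) = (Ld i / Λd i) ^ (-α) * Λd i ^ (-α) := fun i => by
    rw [← Real.mul_rpow (div_pos (hL i) (hΛ i)).le (hΛ i).le, div_mul_cancel₀ _ (hΛ i).ne']
  ext i j
  simp only [diagonal_mul, mul_diagonal, h i, h j]
  ring

theorem diagonal_div_rpow_neg_conj_div_rpow_two_mul (hL : ∀ i, 0 < Ld i) (hΛ : ∀ i, 0 < Λd i) :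
    diagonal (fun i => (Ld i / Λd i) ^ (-α)) * diagonal (fun i => (Ld i / Λd i) ^ (2 * α)) *
      diagonal (fun i => (Ld i / Λd i) ^ (-α)) = 1 := by
  rw [diagonal_mul_diagonal, diagonal_mul_diagonal, ← diagonal_one]
  refine congrArg diagonal (funext fun i => ?_)
  have hr := div_pos (hL i) (hΛ i)
  rw [← Real.rpow_add hr, ← Real.rpow_add hr, show -α + 2 * α + -α = 0 by ring, Real.rpow_zero]

end Scaling

theorem stmt_15_general (n K : ℕ) (α : ℝ)
    (Ld Λd : Fin n → ℝ) (hLd : ∀ i, 0 < Ld i) (hΛd : ∀ i, 0 < Λd i)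
    (Xt : Matrix (Fin n) (Fin n) ℝ)
    (Δd : Fin K → ℝ) (hΔd : ∀ j, Δd j ≠ 0)
    (V : Matrix (Fin n) (Fin K) ℝ)
    (H Wb LΛ X : Matrix (Fin n) (Fin n) ℝ)
    -- `H = Λ^α V Δ Vᵀ Λ^α`
    (hH : H = Matrix.diagonal (fun i => Λd i ^ α) * V * Matrix.diagonal Δd * Vᵀ *
      Matrix.diagonal fun i => Λd i ^ α)
    -- `W̄ = Λ^{-α}(X̃ − H)Λ^{-α}`
    (hWb : Wb = Matrix.diagonal (fun i => Λd i ^ (-α)) * (Xt - H) *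
      Matrix.diagonal fun i => Λd i ^ (-α))
    -- `(L/Λ)^{2α}`
    (hLΛ : LΛ = Matrix.diagonal fun i => (Ld i / Λd i) ^ (2 * α))
    -- `X = L^{-α} X̃ L^{-α}`
    (hX : X = Matrix.diagonal (fun i => Ld i ^ (-α)) * Xt *
      Matrix.diagonal fun i => Ld i ^ (-α))
    (z : ℂ)
    -- `W̄ − z (L/Λ)^{2α}` invertible; its inverse is `G(z)`
    (hinv : IsUnit ((Wb.map (fun x : ℝ => (x : ℂ))) -
      z • LΛ.map (fun x : ℝ => (x : ℂ))).det) :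
    ((X.map (fun x : ℝ => (x : ℂ))) - z • 1).det = 0 ↔
      ((((Matrix.diagonal Δd)⁻¹).map (fun x : ℝ => (x : ℂ))) +
        (V.map (fun x : ℝ => (x : ℂ)))ᵀ *
          ((Wb.map (fun x : ℝ => (x : ℂ))) - z • LΛ.map (fun x : ℝ => (x : ℂ)))⁻¹ *
          V.map (fun x : ℝ => (x : ℂ))).det = 0 := by
  set r : Fin n → ℝ := fun i => (Ld i / Λd i) ^ (-α)
  have hr : ∀ i, r i ≠ 0 := fun i => (Real.rpow_pos_of_pos (div_pos (hLd i) (hΛd i)) _).ne'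
  have hXr : X = diagonal r * (Wb + V * diagonal Δd * Vᵀ) * diagonal r := by
    rw [hX, hWb, hH, diagonal_rpow_neg_conj_sub_spike_add_spike hΛd,
      diagonal_rpow_neg_conj_eq hLd hΛd]
  have hLΛr : diagonal r * LΛ * diagonal r = 1 := by
    rw [hLΛ, diagonal_div_rpow_neg_conj_div_rpow_two_mul hLd hΛd]
  have hΔ : IsUnit (diagonal Δd).det := by
    simpa [det_diagonal, Finset.prod_ne_zero_iff] using hΔd
  let c : ℝ →+* ℂ := Complex.ofRealHom
  have hXc : X.map c = diagonal (fun i => c (r i)) *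
      (Wb.map c + V.map c * (diagonal Δd).map c * (V.map c)ᵀ) * diagonal (fun i => c (r i)) := by
    simp only [hXr, Matrix.map_mul, Matrix.map_add c (map_add c), transpose_map,
      diagonal_map c.map_zero]
  have hLΛc : diagonal (fun i => c (r i)) * LΛ.map c * diagonal (fun i => c (r i)) = 1 := by
    simpa only [Matrix.map_mul, diagonal_map c.map_zero, Matrix.map_one _ c.map_zero c.map_one]
      using congrArg (·.map c) hLΛr
  change (X.map c - z • 1).det = 0 ↔
    (((diagonal Δd)⁻¹).map c + (V.map c)ᵀ * (Wb.map c - z • LΛ.map c)⁻¹ * V.map c).det = 0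
  rw [det_sub_smul_one_eq_zero_iff_of_congr (fun i => (map_ne_zero c).mpr (hr i)) hXc hLΛc,
    map_nonsing_inv c hΔ]
  exact det_add_mul_mul_eq_zero_iff _ _ hinv (c.map_det (diagonal Δd) ▸ hΔ.map c)

/-- master determinant equation for the spiked eigenvalues of the
generalized Laplacian `X = L^{-α} X̃ L^{-α}`. -/
theorem stmt_15 (n K : ℕ) (hn : 2 ≤ n) (hK : 1 ≤ K) (α : ℝ) (hα : 0 < α)
    (Ld Λd : Fin n → ℝ) (hLd : ∀ i, 0 < Ld i) (hΛd : ∀ i, 0 < Λd i)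
    (Xt : Matrix (Fin n) (Fin n) ℝ) (hXt : Xtᵀ = Xt)
    (Δd : Fin K → ℝ) (hΔd : ∀ j, Δd j ≠ 0)
    (V : Matrix (Fin n) (Fin K) ℝ)
    (H Wb LΛ X : Matrix (Fin n) (Fin n) ℝ)
    -- `H = Λ^α V Δ Vᵀ Λ^α`
    (hH : H = Matrix.diagonal (fun i => Λd i ^ α) * V * Matrix.diagonal Δd * Vᵀ *
      Matrix.diagonal fun i => Λd i ^ α)
    -- `W̄ = Λ^{-α}(X̃ − H)Λ^{-α}`
    (hWb : Wb = Matrix.diagonal (fun i => Λd i ^ (-α)) * (Xt - H) *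
      Matrix.diagonal fun i => Λd i ^ (-α))
    -- `(L/Λ)^{2α}`
    (hLΛ : LΛ = Matrix.diagonal fun i => (Ld i / Λd i) ^ (2 * α))
    -- `X = L^{-α} X̃ L^{-α}`
    (hX : X = Matrix.diagonal (fun i => Ld i ^ (-α)) * Xt *
      Matrix.diagonal fun i => Ld i ^ (-α))
    (z : ℂ)
    -- `W̄ − z (L/Λ)^{2α}` invertible; its inverse is `G(z)`
    (hinv : IsUnit ((Wb.map (fun x : ℝ => (x : ℂ))) -
      z • LΛ.map (fun x : ℝ => (x : ℂ))).det) :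
    ((X.map (fun x : ℝ => (x : ℂ))) - z • 1).det = 0 ↔
      ((((Matrix.diagonal Δd)⁻¹).map (fun x : ℝ => (x : ℂ))) +
        (V.map (fun x : ℝ => (x : ℂ)))ᵀ *
          ((Wb.map (fun x : ℝ => (x : ℂ))) - z • LΛ.map (fun x : ℝ => (x : ℂ)))⁻¹ *
          V.map (fun x : ℝ => (x : ℂ))).det = 0 :=
  stmt_15_general n K α Ld Λd hLd hΛd Xt Δd hΔd V H Wb LΛ X hH hWb hLΛ hX z hinv
end

section
/- Large-|z| expansion of solutions of the generalized quadratic vector equation (zeroth-order part of the Lemma on Υ): Let n ≥ 1, α > 0, Λ₁,…,Λ_n > 0 and s_{ij} ≥ 0 (1 ≤ i, j ≤ n) be reals, and set S := max_{1≤i≤n} Λ_i^{−2α}·Σ_{j=1}^n Λ_j^{−2α}·s_{ij}. Let C₀ > 0 and let z ∈ ℂ with z ≠ 0 and |z| ≥ 2·S·C₀. Suppose M₁,…,M_n ∈ ℂ satisfy max_i |M_i| ≤ C₀ and the quadratic vector equation 1/M_i = −z − Λ_i^{−2α}·Σ_{j=1}^n Λ_j^{−2α}·s_{ij}·M_j for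 every i. Then max_{1≤i≤n} |M_i + z^{−1}| ≤ 4·S/|z|³. -/
/-!
Writing `Tᵢ = Σⱼ Kᵢⱼ Mⱼ` with row sums `Σⱼ ‖Kᵢⱼ‖ ≤ S`, the a priori bound `‖M‖ ≤ C₀` gives
`‖T‖ ≤ S C₀ ≤ ‖z‖/2`, so `Mᵢ = -(z + Tᵢ)⁻¹` is at most `2/‖z‖`. Feeding this improved bound back
gives `‖T‖ ≤ 2S/‖z‖`, and `Mᵢ + z⁻¹ = Tᵢ / (z (z + Tᵢ))` is then at most `4S/‖z‖³`.
-/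

section NormedField

variable {𝕜 : Type*} [NormedField 𝕜]

theorem norm_sum_mul_le_of_norm_le {ι : Type*} [Fintype ι] (K M : ι → 𝕜) {B : ℝ}
    (hM : ∀ j, ‖M j‖ ≤ B) : ‖∑ j, K j * M j‖ ≤ (∑ j, ‖K j‖) * B :=
  calc ‖∑ j, K j * M j‖ ≤ ∑ j, ‖K j * M j‖ := norm_sum_le _ _
    _ ≤ ∑ j, ‖K j‖ * B := Finset.sum_le_sum fun j _ => by
        rw [norm_mul]; exact mul_le_mul_of_nonneg_left (hM j) (norm_nonneg _)
    _ = (∑ j, ‖K j‖) * B := (Finset.sum_mul _ _ _).symm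

variable {z w m : 𝕜}

theorem half_norm_le_norm_add (hw : ‖w‖ ≤ ‖z‖ / 2) : ‖z‖ / 2 ≤ ‖z + w‖ := by
  have := norm_sub_norm_le z (-w)
  rw [sub_neg_eq_add, norm_neg] at this
  linarith

theorem eq_neg_inv_of_inv_eq_neg (hm : m⁻¹ = -(z + w)) : m = -(z + w)⁻¹ := by
  rw [← inv_inv m, hm, inv_neg]

theorem norm_le_of_inv_eq_neg_add (hz : z ≠ 0) (hw : ‖w‖ ≤ ‖z‖ / 2)
    (hm : m⁻¹ = -(z + w)) : ‖m‖ ≤ 2 / ‖z‖ := by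
  have hzpos : 0 < ‖z‖ := norm_pos_iff.mpr hz
  rw [eq_neg_inv_of_inv_eq_neg hm, norm_neg, norm_inv, inv_eq_one_div,
    div_le_div_iff₀ (by linarith [half_norm_le_norm_add hw]) hzpos]
  linarith [half_norm_le_norm_add hw]

theorem norm_add_inv_le_of_inv_eq_neg_add (hz : z ≠ 0) (hw : ‖w‖ ≤ ‖z‖ / 2)
    (hm : m⁻¹ = -(z + w)) : ‖m + z⁻¹‖ ≤ 2 * ‖w‖ / ‖z‖ ^ 2 := by
  have hzpos : 0 < ‖z‖ := norm_pos_iff.mpr hz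
  have hzw : ‖z‖ / 2 ≤ ‖z + w‖ := half_norm_le_norm_add hw
  have hzw0 : z + w ≠ 0 := norm_pos_iff.mp (by linarith)
  have hexpand : m + z⁻¹ = w / (z * (z + w)) := by
    rw [eq_neg_inv_of_inv_eq_neg hm]
    field_simp
    ring
  calc ‖m + z⁻¹‖ = ‖w‖ / (‖z‖ * ‖z + w‖) := by rw [hexpand, norm_div, norm_mul]
    _ ≤ ‖w‖ / (‖z‖ * (‖z‖ / 2)) := by gcongr
    _ = 2 * ‖w‖ / ‖z‖ ^ 2 := by field_simp

theorem norm_add_inv_le_of_qve {ι : Type*} [Fintype ι] (K : ι → ι → 𝕜) {S C₀ : ℝ}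
    (hK : ∀ i, ∑ j, ‖K i j‖ ≤ S) (hz : z ≠ 0) (hz2 : 2 * S * C₀ ≤ ‖z‖)
    (M : ι → 𝕜) (hM : ∀ i, ‖M i‖ ≤ C₀) (hQVE : ∀ i, (M i)⁻¹ = -z - ∑ j, K i j * M j) (i : ι) :
    ‖M i + z⁻¹‖ ≤ 4 * S / ‖z‖ ^ 3 := by
  have hzpos : 0 < ‖z‖ := norm_pos_iff.mpr hz
  have hQVE' : ∀ i, (M i)⁻¹ = -(z + ∑ j, K i j * M j) := fun i => by rw [hQVE i, neg_add']
  have hrow : ∀ {B : ℝ}, 0 ≤ B → (∀ j, ‖M j‖ ≤ B) → ∀ i, ‖∑ j, K i j * M j‖ ≤ S * B :=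
    fun hB hMB i => (norm_sum_mul_le_of_norm_le _ _ hMB).trans
      (mul_le_mul_of_nonneg_right (hK i) hB)
  have hC₀ : 0 ≤ C₀ := (norm_nonneg _).trans (hM i)
  have hsmall : ∀ i, ‖∑ j, K i j * M j‖ ≤ ‖z‖ / 2 := fun i => by
    linarith [hrow hC₀ hM i]
  have hMz : ∀ j, ‖M j‖ ≤ 2 / ‖z‖ := fun j => norm_le_of_inv_eq_neg_add hz (hsmall j) (hQVE' j)
  calc ‖M i + z⁻¹‖ ≤ 2 * ‖∑ j, K i j * M j‖ / ‖z‖ ^ 2 :=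
        norm_add_inv_le_of_inv_eq_neg_add hz (hsmall i) (hQVE' i)
    _ ≤ 2 * (S * (2 / ‖z‖)) / ‖z‖ ^ 2 := by gcongr; exact hrow (by positivity) hMz i
    _ = 4 * S / ‖z‖ ^ 3 := by field_simp; ring

end NormedField

theorem stmt_17_general (n : ℕ) (α : ℝ)
    (Λ : Fin n → ℝ) (hΛ : ∀ i, 0 < Λ i)
    (s : Fin n → Fin n → ℝ) (hs : ∀ i j, 0 ≤ s i j)
    (S : ℝ) (hS : S = ⨆ i : Fin n, Λ i ^ (-(2 * α)) * ∑ j, Λ j ^ (-(2 * α)) * s i j)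
    (C₀ : ℝ)
    (z : ℂ) (hz : z ≠ 0) (hz2 : 2 * S * C₀ ≤ ‖z‖)
    (M : Fin n → ℂ) (hM : ∀ i, ‖M i‖ ≤ C₀)
    (hQVE : ∀ i, (M i)⁻¹ =
      -z - ((Λ i ^ (-(2 * α)) : ℝ) : ℂ) *
        ∑ j, ((Λ j ^ (-(2 * α)) : ℝ) : ℂ) * (s i j : ℂ) * M j) :
    ∀ i, ‖M i + z⁻¹‖ ≤ 4 * S / ‖z‖ ^ 3 := by
  set A : Fin n → ℝ := fun i => Λ i ^ (-(2 * α))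
  have hA : ∀ i, 0 ≤ A i := fun i => (Real.rpow_pos_of_pos (hΛ i) _).le
  set K : Fin n → Fin n → ℂ := fun i j => ((A i * A j * s i j : ℝ) : ℂ)
  have hK : ∀ i, ∑ j, ‖K i j‖ ≤ S := fun i => by
    have hnorm : ∑ j, ‖K i j‖ = A i * ∑ j, A j * s i j := by
      simp only [K, Complex.norm_real, Real.norm_eq_abs, Finset.mul_sum]
      exact Finset.sum_congr rfl fun j _ => by
        rw [abs_of_nonneg (mul_nonneg (mul_nonneg (hA i) (hA j)) (hs i j)), mul_assoc]
    rw [hnorm, hS]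
    exact le_ciSup (f := fun i => A i * ∑ j, A j * s i j) (Set.finite_range _).bddAbove i
  refine norm_add_inv_le_of_qve K hK hz hz2 M hM fun i => ?_
  rw [hQVE i, Finset.mul_sum]
  congr 1
  exact Finset.sum_congr rfl fun j _ => by push_cast [K]; ring

/-- large-`|z|` expansion of solutions of the generalized quadratic
vector equation with variance profile `Λ_i^{-2α} s_{ij} Λ_j^{-2α}`. -/
theorem stmt_17 (n : ℕ) (hn : 1 ≤ n) (α : ℝ) (hα : 0 < α)
    (Λ : Fin n → ℝ) (hΛ : ∀ i, 0 < Λ i)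
    (s : Fin n → Fin n → ℝ) (hs : ∀ i j, 0 ≤ s i j)
    (S : ℝ) (hS : S = ⨆ i : Fin n, Λ i ^ (-(2 * α)) * ∑ j, Λ j ^ (-(2 * α)) * s i j)
    (C₀ : ℝ) (hC₀ : 0 < C₀)
    (z : ℂ) (hz : z ≠ 0) (hz2 : 2 * S * C₀ ≤ ‖z‖)
    (M : Fin n → ℂ) (hM : ∀ i, ‖M i‖ ≤ C₀)
    (hQVE : ∀ i, (M i)⁻¹ =
      -z - ((Λ i ^ (-(2 * α)) : ℝ) : ℂ) *
        ∑ j, ((Λ j ^ (-(2 * α)) : ℝ) : ℂ) * (s i j : ℂ) * M j) :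
    ∀ i, ‖M i + z⁻¹‖ ≤ 4 * S / ‖z‖ ^ 3 :=
  stmt_17_general n α Λ hΛ s hs S hS C₀ z hz hz2 M hM hQVE
end
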